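/- arXiv:2109.13727 — 5 statements merged into one kernel-verified Lean document; each statement's English description precedes it below -/
import Mathlib

section
/- Let G be a finite graph with a perfect matching M. A subset S ⊆ E(G)\M is an anti-forcing set of M if and only if every M-alternating cycle of G contains at least one edge of S. -/
namespace AF

variable {V : Type*}

/-- `M` is (the edge set of) a perfect matching of `G`. -/
def IsPM (G : SimpleGraph V) (M : Set (Sym2 V)) : Prop :=
  M ⊆ G.edgeSet ∧ ∀ v : V, ∃! e, e ∈ M ∧ v ∈ e

/-- `S` is an anti-forcing set of the perfect matching `M`:
`S ⊆ E(G) \ M` and `G - S` has `M` as its unique perfect matching. -/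
def IsAntiforcing (G : SimpleGraph V) (M S : Set (Sym2 V)) : Prop :=
  S ⊆ G.edgeSet \ M ∧ IsPM (G.deleteEdges S) M ∧
    ∀ N, IsPM (G.deleteEdges S) N → N = M

/-- The anti-forcing number `af(G,M)`. -/
noncomputable def af (G : SimpleGraph V) (M : Set (Sym2 V)) : ℕ :=
  sInf {n | ∃ S : Set (Sym2 V), S.Finite ∧ S.ncard = n ∧ IsAntiforcing G M S}

/-- The anti-forcing polynomial `Af(G,x) = ∑_M x^{af(G,M)}`. -/
noncomputable def AfPoly (G : SimpleGraph V) : Polynomial ℤ :=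
  ∑ᶠ M ∈ {M : Set (Sym2 V) | IsPM G M}, (Polynomial.X : Polynomial ℤ) ^ af G M

/-- The anti-forcing spectrum of `G`. -/
def Spectrum (G : SimpleGraph V) : Set ℕ :=
  {n | ∃ M, IsPM G M ∧ af G M = n}

/-- `c` is an `M`-alternating cycle: a cycle whose edges alternate
(cyclically) between `M` and its complement. -/
def IsAltCycle (G : SimpleGraph V) (M : Set (Sym2 V)) {v : V} (c : G.Walk v v) : Prop :=
  c.IsCycle ∧ ∀ i : Fin c.edges.length,
    (c.edges.get i ∈ M ↔
      c.edges.get ⟨((i : ℕ) + 1) % c.edges.length, Nat.mod_lt _ i.pos⟩ ∉ M)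

/-- A compatible `M`-alternating set, given as a family of edge sets of
`M`-alternating cycles which pairwise intersect only in edges of `M`. -/
def IsCompatibleAltSet (G : SimpleGraph V) (M : Set (Sym2 V))
    (𝒞 : Set (Set (Sym2 V))) : Prop :=
  (∀ C ∈ 𝒞, ∃ (v : V) (c : G.Walk v v), IsAltCycle G M c ∧ {e | e ∈ c.edges} = C) ∧
  (∀ C ∈ 𝒞, ∀ D ∈ 𝒞, C ≠ D → C ∩ D ⊆ M)

/-- `c'(G,M)`: the maximum cardinality of a compatible `M`-alternating set. -/
noncomputable def cmax (G : SimpleGraph V) (M : Set (Sym2 V)) : ℕ :=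
  sSup {n | ∃ 𝒞 : Set (Set (Sym2 V)), 𝒞.Finite ∧ 𝒞.ncard = n ∧ IsCompatibleAltSet G M 𝒞}

/-- The edge `e` of `G - S` is forced by `S`: it belongs to every
perfect matching of `G - S`. -/
def ForcedBy (G : SimpleGraph V) (S : Set (Sym2 V)) (e : Sym2 V) : Prop :=
  e ∈ (G.deleteEdges S).edgeSet ∧ ∀ N, IsPM (G.deleteEdges S) N → e ∈ N

/-- The edge `e` of `G - S` is anti-forced by `S`: it belongs to no
perfect matching of `G - S`. -/
def AntiForcedBy (G : SimpleGraph V) (S : Set (Sym2 V)) (e : Sym2 V) : Prop :=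
  e ∈ (G.deleteEdges S).edgeSet ∧ ∀ N, IsPM (G.deleteEdges S) N → e ∉ N

/-- The vertices of `G ⊖ S`: delete the endpoints of every forced edge. -/
def ominusVerts (G : SimpleGraph V) (S : Set (Sym2 V)) : Set V :=
  {v | ¬ ∃ e, ForcedBy G S e ∧ v ∈ e}

/-- The graph `G ⊖ S`: from `G - S` delete all anti-forced edges and the
endpoints of all forced edges. -/
def ominus (G : SimpleGraph V) (S : Set (Sym2 V)) :
    SimpleGraph ↥(ominusVerts G S) :=
  (G.deleteEdges (S ∪ {e | AntiForcedBy G S e})).induce (ominusVerts G S)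

/-- Restriction of an edge set of `G` to a graph on a subtype of `V`. -/
def restrictEdges (W : Set V) (M : Set (Sym2 V)) : Set (Sym2 ↥W) :=
  {e | Sym2.map (Subtype.val) e ∈ M}

/-- Positions of hexagons, in the "brick wall" model of the hexagonal lattice:
vertices are `ℤ × ℤ`; the hexagon at position `p` (with `p.1 + p.2` even) has
vertex set `{p, p+(1,0), p+(2,0), p+(0,1), p+(1,1), p+(2,1)}`. -/
abbrev HexPos := ℤ × ℤ

def hexVerts (p : HexPos) : Set (ℤ × ℤ) :=
  {p, p + (1,0), p + (2,0), p + (0,1), p + (1,1), p + (2,1)}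

def hexEdges (p : HexPos) : Set (Sym2 (ℤ × ℤ)) :=
  {s(p, p + (1,0)), s(p + (1,0), p + (2,0)), s(p + (0,1), p + (1,1)),
   s(p + (1,1), p + (2,1)), s(p, p + (0,1)), s(p + (2,0), p + (2,1))}

/-- The vertex set used by a set `H` of hexagons. -/
def hexVertexSet (H : Set HexPos) : Set (ℤ × ℤ) := ⋃ p ∈ H, hexVerts p

/-- The hexagonal system determined by a set `H` of hexagon positions,
as a graph on its own vertex set. -/
def hexSystemGraph (H : Set HexPos) : SimpleGraph ↥(hexVertexSet H) :=
  (SimpleGraph.fromEdgeSet (⋃ p ∈ H, hexEdges p)).induce (hexVertexSet H)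

/-- Two hexagon positions sharing an edge. -/
def HexAdj (p q : HexPos) : Prop :=
  q - p ∈ ({(2,0), (-2,0), (1,1), (-1,-1), (1,-1), (-1,1)} : Set HexPos)

/-- The dual (inner) graph of a set of hexagons. -/
def dualGraph (H : Set HexPos) : SimpleGraph ↥H :=
  SimpleGraph.fromRel fun a b => HexAdj a.1 b.1

/-- `H` is a catacondensed hexagonal system: finitely many hexagons on the
even lattice positions whose dual graph is a (nonempty) tree. -/
def IsCatacondensed (H : Set HexPos) : Prop :=
  H.Finite ∧ H.Nonempty ∧ (∀ p ∈ H, Even (p.1 + p.2)) ∧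
    (dualGraph H).Connected ∧ (dualGraph H).IsAcyclic

/-- The three axis directions of linear chains. -/
def hexDirs : Set HexPos := {(2,0), (1,1), (1,-1)}

/-- All six directions in which a linear segment may proceed. -/
def hexDirsAll : Set HexPos := {(2,0), (-2,0), (1,1), (-1,-1), (1,-1), (-1,1)}

/-- The vertical edge of the hexagon at `p` associated to the linear
direction `d ∈ hexDirs`: the edge of that hexagon crossed by the line of
centers, on the side of `-d`.  For a linear chain `p, p+d, …, p+n•d` the
vertical edges are exactly `vEdge d (p + k•d)` for `0 ≤ k ≤ n+1`. -/
def vEdge (d p : HexPos) : Sym2 (ℤ × ℤ) :=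
  if d = (2,0) then s(p, p + (0,1))
  else if d = (1,1) then s(p, p + (1,0))
  else s(p + (0,1), p + (1,1))

/-- Starting positions of the segments of a hexagonal chain with segment
lengths `L`, segment directions `d`, and initial hexagon `p0`; consecutive
segments share their kink hexagon. -/
def segStart (d : ℕ → HexPos) (p0 : HexPos) (L : List ℕ) : ℕ → HexPos
  | 0 => p0
  | i + 1 => segStart d p0 L i + (L.getD i 1 - 1) • d i

/-- The set of hexagons of the hexagonal chain with segment lengths `L`. -/
def chainSet (d : ℕ → HexPos) (p0 : HexPos) (L : List ℕ) : Set HexPos :=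
  {q | ∃ i < L.length, ∃ k < L.getD i 0, q = segStart d p0 L i + k • d i}

/-- Replace the last entry `m` of a list by `m - 1`. -/
def decLast (L : List ℕ) : List ℕ :=
  L.dropLast ++ (L.getLast?.elim [] fun m => [m - 1])

/-- The linear hexagonal chain with `n` hexagons. -/
def linChain (n : ℕ) : Set HexPos :=
  {q | ∃ k < n, q = ((2 * (k : ℤ), 0) : HexPos)}

open SimpleGraph in
private lemma walk_support_eq {V : Type*} {G : SimpleGraph V} {u w : V} (q : G.Walk u w) :
    q.support = (List.range (q.length + 1)).map q.getVert := by
  induction q with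
  | nil => rfl
  | cons h q ih =>
      rw [Walk.support_cons, ih, Walk.length_cons]
      conv_rhs => rw [List.range_succ_eq_map, List.map_cons, List.map_map]
      rw [Walk.getVert_zero]
      congr 1

open SimpleGraph in
private lemma walk_edges_eq {V : Type*} {G : SimpleGraph V} {u w : V} (q : G.Walk u w) :
    q.edges = (List.range q.length).map (fun i => s(q.getVert i, q.getVert (i+1))) := by
  induction q with
  | nil => simp
  | cons h q ih =>
      rw [Walk.edges_cons, ih, Walk.length_cons]
      conv_rhs => rw [List.range_succ_eq_map, List.map_cons, List.map_map]
      congr 1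
      · simp [Walk.getVert_cons_succ]

private lemma pa_exists {V : Type*} {M : Set (Sym2 V)} (hM : ∀ v : V, ∃! e, e ∈ M ∧ v ∈ e) :
    ∃ f : V → V, (∀ v, s(v, f v) ∈ M) ∧ ∀ v e, e ∈ M → v ∈ e → e = s(v, f v) := by
  have h1 : ∀ v : V, ∃ w, s(v, w) ∈ M ∧ ∀ e, e ∈ M → v ∈ e → e = s(v, w) := by
    intro v
    obtain ⟨e, ⟨heM, hve⟩, hu⟩ := hM v
    refine ⟨Sym2.Mem.other hve, ?_, ?_⟩
    · rwa [Sym2.other_spec hve]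
    · intro e' he' hve'
      rw [Sym2.other_spec hve]
      exact hu e' ⟨he', hve'⟩
  choose f hf1 hf2 using h1
  exact ⟨f, hf1, hf2⟩

private lemma pa_invol {V : Type*} {M : Set (Sym2 V)} {f : V → V}
    (h1 : ∀ v, s(v, f v) ∈ M) (h2 : ∀ v e, e ∈ M → v ∈ e → e = s(v, f v)) (v : V) :
    f (f v) = v := by
  have h3 := h2 (f v) s(v, f v) (h1 v) (Sym2.mem_mk_right v (f v))
  have h4 : s(f v, v) = s(f v, f (f v)) := (Sym2.eq_swap).trans h3
  exact (Sym2.congr_right.mp h4).symm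

private lemma pa_ne {V : Type*} {G : SimpleGraph V} {M : Set (Sym2 V)} {f : V → V}
    (hs : M ⊆ G.edgeSet) (h1 : ∀ v, s(v, f v) ∈ M) (v : V) : f v ≠ v := by
  intro h
  have h2 := h1 v
  rw [h] at h2
  exact G.not_isDiag_of_mem_edgeSet (hs h2) (Sym2.mk_isDiag_iff.mpr rfl)

private def seq {V : Type*} (f g : V → V) (v0 : V) : ℕ → V
  | 0 => v0
  | t + 1 => if t % 2 = 0 then f (seq f g v0 t) else g (seq f g v0 t)

open SimpleGraph in
private def mkWalk {V : Type*} (G : SimpleGraph V) (x : ℕ → V)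
    (hadj : ∀ t, G.Adj (x t) (x (t+1))) : (a n : ℕ) → G.Walk (x a) (x (a + n))
  | _, 0 => Walk.nil
  | a, n+1 => Walk.cons (hadj a) ((mkWalk G x hadj (a+1) n).copy rfl (congrArg x (by omega)))

open SimpleGraph in
private lemma mkWalk_edges {V : Type*} (G : SimpleGraph V) (x : ℕ → V)
    (hadj : ∀ t, G.Adj (x t) (x (t+1))) : ∀ n a, (mkWalk G x hadj a n).edges
      = (List.range n).map (fun t => s(x (a+t), x (a+t+1))) := by
  intro n
  induction n with
  | zero => intro a; rfl
  | succ n ih =>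
      intro a
      rw [mkWalk, Walk.edges_cons, Walk.edges_copy, ih (a+1)]
      conv_rhs => rw [List.range_succ_eq_map, List.map_cons, List.map_map]
      congr 1
      apply List.map_congr_left
      intro t _
      simp only [Function.comp_apply, Nat.succ_eq_add_one]
      ring_nf

open SimpleGraph in
private lemma mkWalk_support {V : Type*} (G : SimpleGraph V) (x : ℕ → V)
    (hadj : ∀ t, G.Adj (x t) (x (t+1))) : ∀ n a, (mkWalk G x hadj a n).support
      = (List.range (n+1)).map (fun t => x (a+t)) := by
  intro n
  induction n with
  | zero => intro a; rfl
  | succ n ih =>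
      intro a
      rw [mkWalk, Walk.support_cons, Walk.support_copy, ih (a+1)]
      conv_rhs => rw [List.range_succ_eq_map, List.map_cons, List.map_map]
      congr 1
      apply List.map_congr_left
      intro t _
      simp only [Function.comp_apply, Nat.succ_eq_add_one]
      ring_nf

open SimpleGraph in
private lemma mkWalk_length {V : Type*} (G : SimpleGraph V) (x : ℕ → V)
    (hadj : ∀ t, G.Adj (x t) (x (t+1))) (n a : ℕ) : (mkWalk G x hadj a n).length = n := by
  rw [← Walk.length_edges, mkWalk_edges]
  simp

open SimpleGraph in
private lemma exists_alt_cycle_of_two_pm {V : Type*} [Fintype V] (G : SimpleGraph V)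
    (M N : Set (Sym2 V)) (hMs : M ⊆ G.edgeSet) (hMu : ∀ v : V, ∃! e, e ∈ M ∧ v ∈ e)
    (hNs : N ⊆ G.edgeSet) (hNu : ∀ v : V, ∃! e, e ∈ N ∧ v ∈ e) (hne : N ≠ M) :
    ∃ (v : V) (c : G.Walk v v), IsAltCycle G M c ∧ ∀ e ∈ c.edges, e ∈ M ∪ N := by
  classical
  obtain ⟨f, hf1, hf2⟩ := pa_exists hMu
  obtain ⟨g, hg1, hg2⟩ := pa_exists hNu
  have hfi : ∀ v, f (f v) = v := pa_invol hf1 hf2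
  have hgi : ∀ v, g (g v) = v := pa_invol hg1 hg2
  have hfne : ∀ v, f v ≠ v := pa_ne hMs hf1
  have hgne : ∀ v, g v ≠ v := pa_ne hNs hg1
  have hstart : ∃ v0, f v0 ≠ g v0 := by
    by_contra hcon
    push_neg at hcon
    apply hne
    ext e
    induction e using Sym2.ind with
    | _ a b =>
      constructor
      · intro heN
        have h1 : s(a, b) = s(a, g a) := hg2 a _ heN (Sym2.mem_mk_left a b)
        rw [h1, ← hcon a]
        exact hf1 a
      · intro heM
        have h1 : s(a, b) = s(a, f a) := hf2 a _ heM (Sym2.mem_mk_left a b)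
        rw [h1, hcon a]
        exact hg1 a
  obtain ⟨v0, hv0⟩ := hstart
  set x : ℕ → V := seq f g v0 with hxdef
  have hstep : ∀ t, x (t+1) = if t % 2 = 0 then f (x t) else g (x t) := fun t => rfl
  have hse : ∀ t, t % 2 = 0 → x (t+1) = f (x t) := by
    intro t ht; rw [hstep t, if_pos ht]
  have hso : ∀ t, t % 2 = 1 → x (t+1) = g (x t) := by
    intro t ht; rw [hstep t, if_neg (by omega)]
  have hbse : ∀ t, t % 2 = 0 → x t = f (x (t+1)) := by
    intro t ht; rw [hse t ht, hfi]
  have hbso : ∀ t, t % 2 = 1 → x t = g (x (t+1)) := by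
    intro t ht; rw [hso t ht, hgi]
  have hact : ∀ t, f (x t) ≠ g (x t) := by
    intro t
    induction t with
    | zero => exact hv0
    | succ t ih =>
        rcases Nat.mod_two_eq_zero_or_one t with ht | ht
        · intro h
          have h1 : f (x (t+1)) = x t := by rw [hse t ht, hfi]
          have h2 : s(x (t+1), g (x (t+1))) ∈ N := hg1 _
          rw [← h, h1] at h2
          have h3 := hg2 (x t) _ h2 (Sym2.mem_mk_right _ _)
          have h4 : x (t+1) = g (x t) := Sym2.congr_right.mp ((Sym2.eq_swap).trans h3)
          exact ih ((hse t ht).symm.trans h4)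
        · intro h
          have h1 : g (x (t+1)) = x t := by rw [hso t ht, hgi]
          have h2 : s(x (t+1), f (x (t+1))) ∈ M := hf1 _
          rw [h, h1] at h2
          have h3 := hf2 (x t) _ h2 (Sym2.mem_mk_right _ _)
          have h4 : x (t+1) = f (x t) := Sym2.congr_right.mp ((Sym2.eq_swap).trans h3)
          exact ih (h4.symm.trans (hso t ht))
  have hne1 : ∀ t, x (t+1) ≠ x t := by
    intro t
    rcases Nat.mod_two_eq_zero_or_one t with ht | ht
    · rw [hse t ht]; exact hfne _
    · rw [hso t ht]; exact hgne _
  have hedge : ∀ t, s(x t, x (t+1)) ∈ M ∪ N := by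
    intro t
    rcases Nat.mod_two_eq_zero_or_one t with ht | ht
    · rw [hse t ht]; exact Or.inl (hf1 _)
    · rw [hso t ht]; exact Or.inr (hg1 _)
  have hadj : ∀ t, G.Adj (x t) (x (t+1)) := by
    intro t
    rcases hedge t with h | h
    · exact (G.mem_edgeSet).mp (hMs h)
    · exact (G.mem_edgeSet).mp (hNs h)
  have hedgeM : ∀ t, (s(x t, x (t+1)) ∈ M ↔ t % 2 = 0) := by
    intro t
    constructor
    · intro hmem
      by_contra ht
      have ht1 : t % 2 = 1 := by omega
      rw [hso t ht1] at hmem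
      have h3 := hf2 (x t) _ hmem (Sym2.mem_mk_left _ _)
      exact hact t (Sym2.congr_right.mp h3).symm
    · intro ht; rw [hse t ht]; exact hf1 _
  have hbwd : ∀ i j, i % 2 = j % 2 → x (i+1) = x (j+1) → x i = x j := by
    intro i j hp h
    rcases Nat.mod_two_eq_zero_or_one i with hi | hi
    · rw [hbse i hi, hbse j (by omega), h]
    · rw [hbso i hi, hbso j (by omega), h]
  have hbwd_iter : ∀ t i j, i % 2 = j % 2 → x (i + t) = x (j + t) → x i = x j := by
    intro t
    induction t with
    | zero => intro i j _ h; exact h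
    | succ t ih =>
        intro i j hp h
        exact ih i j hp (hbwd (i+t) (j+t) (by omega) h)
  have hPex : ∃ p, 0 < p ∧ p % 2 = 0 ∧ x p = x 0 := by
    obtain ⟨a, b, hab, heq⟩ :=
      Finite.exists_ne_map_eq_of_infinite (fun t : ℕ => (x t, (⟨t % 2, by omega⟩ : Fin 2)))
    have h1 : x a = x b := congrArg Prod.fst heq
    have h2 : a % 2 = b % 2 := by
      have h3 := congrArg Prod.snd heq
      simpa using h3
    rcases Nat.lt_or_ge a b with h | h
    · refine ⟨b - a, by omega, by omega, ?_⟩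
      refine hbwd_iter a (b - a) 0 (by omega) ?_
      have e1 : b - a + a = b := by omega
      have e2 : 0 + a = a := by omega
      rw [e1, e2]; exact h1.symm
    · have hba : b < a := by omega
      refine ⟨a - b, by omega, by omega, ?_⟩
      refine hbwd_iter b (a - b) 0 (by omega) ?_
      have e1 : a - b + b = a := by omega
      have e2 : 0 + b = b := by omega
      rw [e1, e2]; exact h1
  set p := Nat.find hPex with hpdef
  obtain ⟨hp_pos, hp_even, hp_ret⟩ := Nat.find_spec hPex
  have hp_min : ∀ m, 0 < m → m % 2 = 0 → x m = x 0 → p ≤ m := by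
    intro m h1 h2 h3
    exact Nat.find_le ⟨h1, h2, h3⟩
  have hkey0 : ∀ i j, i < j → j ≤ p → ¬(i = 0 ∧ j = p) → x i ≠ x j := by
    intro i j hij hjp hexc heq
    by_cases hpar : i % 2 = j % 2
    · have h0 : x (j - i) = x 0 := by
        refine hbwd_iter i (j - i) 0 (by omega) ?_
        have e1 : j - i + i = j := by omega
        have e2 : 0 + i = i := by omega
        rw [e1, e2]; exact heq.symm
      have := hp_min (j - i) (by omega) (by omega) h0
      omega
    · have hrefl : ∀ t, t ≤ j - i → x (i + t) = x (j - t) := by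
        intro t
        induction t with
        | zero => intro _; simpa using heq
        | succ t ih =>
            intro ht
            have h1 := ih (by omega)
            have hj : j - t = (j - (t+1)) + 1 := by omega
            rcases Nat.mod_two_eq_zero_or_one (i + t) with hit | hit
            · have h2 : x (j - (t+1)) = f (x (j - t)) := by
                rw [hj]
                exact hbse _ (by omega)
              rw [h2, ← h1]
              exact hse _ hit
            · have h2 : x (j - (t+1)) = g (x (j - t)) := by
                rw [hj]
                exact hbso _ (by omega)
              rw [h2, ← h1]
              exact hso _ hit
      have hmid := hrefl ((j - i - 1) / 2) (by omega)
      have hmm : i + (j - i - 1) / 2 + 1 = j - (j - i - 1) / 2 := by omega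
      rw [← hmm] at hmid
      exact hne1 _ hmid.symm
  have hp2 : p ≠ 2 := by
    intro h
    have h1 : x 1 = f (x 0) := hse 0 rfl
    have h2 : x 2 = g (x 1) := hso 1 rfl
    have h3 : g (x 1) = x 0 := by rw [← h2, ← h]; exact hp_ret
    have h4 : f (x 1) = x 0 := by rw [h1, hfi]
    exact hact 1 (h4.trans h3.symm)
  have hp4 : 4 ≤ p := by omega
  have hxp : x (0 + p) = x 0 := by rw [Nat.zero_add]; exact hp_ret
  let c : G.Walk (x 0) (x 0) := (mkWalk G x hadj 0 p).copy rfl hxp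
  have hcedges : c.edges = (List.range p).map (fun t => s(x t, x (t+1))) := by
    show ((mkWalk G x hadj 0 p).copy rfl hxp).edges = _
    rw [Walk.edges_copy, mkWalk_edges]
    simp only [Nat.zero_add]
  have hcsupp : c.support = (List.range (p+1)).map x := by
    show ((mkWalk G x hadj 0 p).copy rfl hxp).support = _
    rw [Walk.support_copy, mkWalk_support]
    simp only [Nat.zero_add]
  have hclen : c.edges.length = p := by rw [hcedges, List.length_map, List.length_range]
  have hget : ∀ (i : ℕ) (hi : i < c.edges.length), c.edges.get ⟨i, hi⟩ = s(x i, x (i+1)) := by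
    intro i hi
    have hi' : i < p := by omega
    simp only [List.get_eq_getElem]
    rw [List.getElem_of_eq hcedges hi, List.getElem_map, List.getElem_range]
  refine ⟨x 0, c, ⟨?_, ?_⟩, ?_⟩
  · refine ⟨⟨⟨?_⟩, ?_⟩, ?_⟩
    · rw [hcedges]
      refine List.Nodup.map_on ?_ List.nodup_range
      intro s hs t ht hst
      rw [List.mem_range] at hs ht
      by_contra hne'
      rcases Sym2.eq_iff.mp hst with ⟨h1, h2⟩ | ⟨h1, h2⟩
      · rcases Nat.lt_or_ge s t with h | h
        · exact hkey0 s t h (by omega) (by omega) h1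
        · exact hkey0 t s (by omega) (by omega) (by omega) h1.symm
      · by_cases h7 : s + 1 = t
        · have h8 : x s = x (s + 2) := by
            rw [h1]; congr 1; omega
          have h9 : x 2 = x 0 := by
            refine hbwd_iter s 2 0 (by omega) ?_
            have e1 : 2 + s = s + 2 := by omega
            have e2 : 0 + s = s := by omega
            rw [e1, e2]; exact h8.symm
          have := hp_min 2 (by omega) (by omega) h9
          omega
        · rcases Nat.lt_or_ge (s+1) t with h8 | h8
          · exact hkey0 (s+1) t h8 (by omega) (by omega) h2
          · by_cases h9 : t = 0 ∧ s + 1 = p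
            · have h10 : x 1 = x s := by
                rw [h1]; congr 1; omega
              exact hkey0 1 s (by omega) (by omega) (by omega) h10
            · have ht' : t < s + 1 := by omega
              exact hkey0 t (s+1) ht' (by omega) h9 h2.symm
    · intro hnil
      have h1 : c.length = p := by rw [← Walk.length_edges]; exact hclen
      rw [hnil] at h1
      simp at h1
      omega
    · rw [hcsupp, List.range_succ_eq_map, List.map_cons, List.map_map, List.tail_cons]
      refine List.Nodup.map_on ?_ List.nodup_range
      intro s hs t ht hst
      rw [List.mem_range] at hs ht
      have hst' : x (s+1) = x (t+1) := hst
      by_contra hne'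
      rcases Nat.lt_or_ge s t with h | h
      · exact hkey0 (s+1) (t+1) (by omega) (by omega) (by omega) hst'
      · exact hkey0 (t+1) (s+1) (by omega) (by omega) (by omega) hst'.symm
  · intro i
    rcases i with ⟨i, hilt⟩
    simp only [hget, hedgeM]
    rw [hclen] at hilt ⊢
    rcases Nat.lt_or_ge (i+1) p with h | h
    · rw [Nat.mod_eq_of_lt h]; omega
    · have h2 : i + 1 = p := by omega
      rw [h2, Nat.mod_self]; omega
  · intro e he
    rw [hcedges, List.mem_map] at he
    obtain ⟨t, _, rfl⟩ := he
    exact hedge t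

/-- `S ⊆ E(G) \ M` is an anti-forcing set of the perfect
matching `M` iff every `M`-alternating cycle of `G` contains an edge of `S`. -/
theorem isAntiforcing_iff_meets_all_alt_cycles {V : Type*} [Fintype V]
    (G : SimpleGraph V) (M : Set (Sym2 V)) (hM : IsPM G M)
    (S : Set (Sym2 V)) (hS : S ⊆ G.edgeSet \ M) :
    IsAntiforcing G M S ↔
      ∀ (v : V) (c : G.Walk v v), IsAltCycle G M c → ∃ e ∈ c.edges, e ∈ S := by
  classical
  constructor
  · rintro ⟨hAF1, hAF2, hAF3⟩ v c hc
    by_contra hcon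
    push_neg at hcon
    obtain ⟨hcyc, halt⟩ := hc
    set n := c.length with hn
    have hn3 : 3 ≤ n := hcyc.three_le_length
    set x : ℕ → V := c.getVert with hx
    have hsupp : c.support = (List.range (n+1)).map x := walk_support_eq c
    have hedges : c.edges = (List.range n).map (fun i => s(x i, x (i+1))) := walk_edges_eq c
    have hlen : c.edges.length = n := c.length_edges
    have hget : ∀ (i : ℕ) (hi : i < c.edges.length), c.edges.get ⟨i, hi⟩ = s(x i, x (i+1)) := by
      intro i hi
      simp only [List.get_eq_getElem]
      rw [List.getElem_of_eq hedges hi, List.getElem_map, List.getElem_range]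
    have hx0 : x n = x 0 := by
      show c.getVert c.length = c.getVert 0
      rw [SimpleGraph.Walk.getVert_length, SimpleGraph.Walk.getVert_zero]
    have htail : c.support.tail.Nodup := hcyc.support_nodup
    have htail2 : ((List.range n).map (fun i => x (i+1))).Nodup := by
      rw [hsupp, List.range_succ_eq_map, List.map_cons, List.map_map, List.tail_cons] at htail
      exact htail
    have hinj : ∀ s t, s < n → t < n → x (s+1) = x (t+1) → s = t := by
      intro s t hs ht h
      exact List.inj_on_of_nodup_map htail2 (List.mem_range.mpr hs) (List.mem_range.mpr ht) h
    have hkey : ∀ i j, i ≤ n → j ≤ n → x i = x j →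
        i = j ∨ (i = 0 ∧ j = n) ∨ (i = n ∧ j = 0) := by
      intro i j hi hj hij
      by_cases hi0 : i = 0
      · subst hi0
        by_cases hj0 : j = 0
        · left; omega
        · by_cases hjn : j = n
          · right; left; exact ⟨rfl, hjn⟩
          · exfalso
            have h1 : x ((n-1)+1) = x ((j-1)+1) := by
              have e1 : (n-1)+1 = n := by omega
              have e2 : (j-1)+1 = j := by omega
              rw [e1, e2, hx0]; exact hij
            have := hinj (n-1) (j-1) (by omega) (by omega) h1
            omega
      · by_cases hj0 : j = 0
        · subst hj0
          by_cases hin : i = n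
          · right; right; exact ⟨hin, rfl⟩
          · exfalso
            have h1 : x ((i-1)+1) = x ((n-1)+1) := by
              have e1 : (i-1)+1 = i := by omega
              have e2 : (n-1)+1 = n := by omega
              rw [e1, e2, hx0]; exact hij
            have := hinj (i-1) (n-1) (by omega) (by omega) h1
            omega
        · left
          have h1 : x ((i-1)+1) = x ((j-1)+1) := by
            have e1 : (i-1)+1 = i := by omega
            have e2 : (j-1)+1 = j := by omega
            rw [e1, e2]; exact hij
          have := hinj (i-1) (j-1) (by omega) (by omega) h1
          omega
    have halt' : ∀ i, i < n →
        (s(x i, x (i+1)) ∈ M ↔ s(x ((i+1) % n), x ((i+1) % n + 1)) ∉ M) := by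
      intro i hi
      have h := halt ⟨i, (by omega : i < c.edges.length)⟩
      simp only [hget] at h
      simpa [hlen] using h
    have hEdge_index : ∀ e ∈ c.edges, ∃ i, i < n ∧ e = s(x i, x (i+1)) := by
      intro e he
      rw [hedges, List.mem_map] at he
      obtain ⟨i, hi, rfl⟩ := he
      exact ⟨i, List.mem_range.mp hi, rfl⟩
    have hmemsup : ∀ e ∈ c.edges, ∀ u, u ∈ e → u ∈ c.support := by
      intro e he u hu
      obtain ⟨i, hi, rfl⟩ := hEdge_index e he
      rw [SimpleGraph.Walk.mem_support_iff_exists_getVert]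
      rcases Sym2.mem_iff.mp hu with h | h
      · exact ⟨i, h.symm, by omega⟩
      · exact ⟨i+1, h.symm, by omega⟩
    have hincid : ∀ k, 1 ≤ k → k ≤ n → ∀ i, i < n →
        (x k ∈ s(x i, x (i+1)) ↔ (i = k - 1 ∨ i = k % n)) := by
      intro k hk1 hkn i hin
      rw [Sym2.mem_iff]
      constructor
      · rintro (h | h)
        · rcases hkey i k (by omega) hkn h.symm with h' | ⟨h1, h2⟩ | ⟨h1, h2⟩
          · right; rw [Nat.mod_eq_of_lt (by omega : k < n)]; exact h'
          · right; rw [h2, Nat.mod_self]; exact h1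
          · exfalso; omega
        · rcases hkey (i+1) k (by omega) hkn h.symm with h' | ⟨h1, h2⟩ | ⟨h1, h2⟩
          · left; omega
          · exfalso; omega
          · exfalso; omega
      · rintro (h | h)
        · right
          rw [h]
          have e1 : k - 1 + 1 = k := by omega
          rw [e1]
        · left
          rw [h]
          rcases Nat.lt_or_ge k n with h' | h'
          · rw [Nat.mod_eq_of_lt h']
          · have e1 : k = n := by omega
            rw [e1, Nat.mod_self, hx0]
    set Ec : Set (Sym2 V) := {e | e ∈ c.edges} with hEc
    set N : Set (Sym2 V) := (M \ Ec) ∪ (Ec \ M) with hNdef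
    have hEcC : ∀ i, i < n → s(x i, x (i+1)) ∈ Ec := by
      intro i hi
      show s(x i, x (i+1)) ∈ c.edges
      rw [hedges]
      exact List.mem_map.mpr ⟨i, List.mem_range.mpr hi, rfl⟩
    have hEcc' : ∀ e ∈ Ec, e ∈ c.edges := fun e he => he
    have hNsub : N ⊆ (G.deleteEdges S).edgeSet := by
      rw [SimpleGraph.edgeSet_deleteEdges]
      rintro e (⟨he, _⟩ | ⟨he, _⟩)
      · exact ⟨hM.1 he, fun hs => (hS hs).2 he⟩
      · exact ⟨c.edges_subset_edgeSet he, hcon e he⟩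
    have hNpm : ∀ u : V, ∃! e, e ∈ N ∧ u ∈ e := by
      intro u
      by_cases hu : u ∈ c.support
      · obtain ⟨k0, hk0v, hk0n⟩ := SimpleGraph.Walk.mem_support_iff_exists_getVert.mp hu
        have hk0n' : k0 ≤ n := by omega
        set k : ℕ := if k0 = 0 then n else k0 with hkdef
        have hk1' : 1 ≤ k := by rw [hkdef]; split <;> omega
        have hkn : k ≤ n := by rw [hkdef]; split <;> omega
        have hxk : x k = u := by
          rw [hkdef]; split
          · next h0 => rw [hx0, ← h0]; exact hk0v
          · next h0 => exact hk0v
        have haEc : s(x (k-1), x (k-1+1)) ∈ Ec := hEcC (k-1) (by omega)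
        have hbEc : s(x (k % n), x (k % n + 1)) ∈ Ec := hEcC (k % n) (Nat.mod_lt _ (by omega))
        have hua : u ∈ s(x (k-1), x (k-1+1)) := by
          rw [← hxk]
          exact (hincid k hk1' hkn (k-1) (by omega)).mpr (Or.inl rfl)
        have hub : u ∈ s(x (k % n), x (k % n + 1)) := by
          rw [← hxk]
          exact (hincid k hk1' hkn (k % n) (Nat.mod_lt _ (by omega))).mpr (Or.inr rfl)
        have hone := halt' (k-1) (by omega)
        have e2 : (k-1+1) % n = k % n := by congr 1; omega
        rw [e2] at hone
        obtain ⟨eM, hMM, huniqM⟩ := hM.2 u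
        by_cases haM : s(x (k-1), x (k-1+1)) ∈ M
        · have hbM : s(x (k % n), x (k % n + 1)) ∉ M := hone.mp haM
          refine ⟨s(x (k % n), x (k % n + 1)), ⟨Or.inr ⟨hbEc, hbM⟩, hub⟩, ?_⟩
          rintro e' ⟨h1, h3⟩
          rcases h1 with ⟨h1, h2⟩ | ⟨h1, h2⟩
          · exfalso
            have e4 : e' = s(x (k-1), x (k-1+1)) :=
              (huniqM e' ⟨h1, h3⟩).trans (huniqM _ ⟨haM, hua⟩).symm
            exact h2 (by rw [e4]; exact haEc)
          · obtain ⟨i, hi, hei⟩ := hEdge_index e' (hEcc' e' h1)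
            have h5 : x k ∈ s(x i, x (i+1)) := by
              rw [hxk, ← hei]; exact h3
            rcases (hincid k hk1' hkn i hi).mp h5 with h' | h'
            · exfalso
              apply h2
              rw [hei, h']; exact haM
            · rw [hei, h']
        · have hbM : s(x (k % n), x (k % n + 1)) ∈ M := by
            by_contra hb
            exact haM (hone.mpr hb)
          refine ⟨s(x (k-1), x (k-1+1)), ⟨Or.inr ⟨haEc, haM⟩, hua⟩, ?_⟩
          rintro e' ⟨h1, h3⟩
          rcases h1 with ⟨h1, h2⟩ | ⟨h1, h2⟩
          · exfalso
            have e4 : e' = s(x (k % n), x (k % n + 1)) :=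
              (huniqM e' ⟨h1, h3⟩).trans (huniqM _ ⟨hbM, hub⟩).symm
            exact h2 (by rw [e4]; exact hbEc)
          · obtain ⟨i, hi, hei⟩ := hEdge_index e' (hEcc' e' h1)
            have h5 : x k ∈ s(x i, x (i+1)) := by
              rw [hxk, ← hei]; exact h3
            rcases (hincid k hk1' hkn i hi).mp h5 with h' | h'
            · rw [hei, h']
            · exfalso
              apply h2
              rw [hei, h']; exact hbM
      · obtain ⟨eM, ⟨heM, hueM⟩, huniqM⟩ := hM.2 u
        have heMEc : eM ∉ Ec := fun hc' => hu (hmemsup eM (hEcc' eM hc') u hueM)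
        refine ⟨eM, ⟨Or.inl ⟨heM, heMEc⟩, hueM⟩, ?_⟩
        rintro e' ⟨h1, h3⟩
        rcases h1 with ⟨h1, _⟩ | ⟨h1, _⟩
        · exact huniqM e' ⟨h1, h3⟩
        · exact absurd (hmemsup e' (hEcc' e' h1) u h3) hu
    have hNneM : N ≠ M := by
      have h0 := halt' 0 (by omega)
      have e1 : (0+1) % n = 1 := Nat.mod_eq_of_lt (by omega)
      rw [e1] at h0
      intro hNM
      by_cases hm : s(x 0, x (0+1)) ∈ M
      · have h2 : s(x 1, x (1+1)) ∉ M := h0.mp hm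
        have h3 : s(x 1, x (1+1)) ∈ N := Or.inr ⟨hEcC 1 (by omega), h2⟩
        rw [hNM] at h3
        exact h2 h3
      · have h3 : s(x 0, x (0+1)) ∈ N := Or.inr ⟨hEcC 0 (by omega), hm⟩
        rw [hNM] at h3
        exact hm h3
    exact hNneM (hAF3 N ⟨hNsub, hNpm⟩)
  · intro hcyc
    refine ⟨hS, ⟨?_, hM.2⟩, ?_⟩
    · intro e he
      rw [SimpleGraph.edgeSet_deleteEdges]
      exact ⟨hM.1 he, fun hs => (hS hs).2 he⟩
    · intro N hN
      by_contra hne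
      have hMs : M ⊆ G.edgeSet := hM.1
      have hNs : N ⊆ G.edgeSet := by
        intro e he
        have h1 := hN.1 he
        rw [SimpleGraph.edgeSet_deleteEdges] at h1
        exact h1.1
      obtain ⟨v, c, hc, hsub⟩ := exists_alt_cycle_of_two_pm G M N hMs hM.2 hNs hN.2 hne
      obtain ⟨e, hec, heS⟩ := hcyc v c hc
      rcases hsub e hec with h | h
      · exact (hS heS).2 h
      · have h1 := hN.1 h
        rw [SimpleGraph.edgeSet_deleteEdges] at h1
        exact h1.2 heS


end AF
end

section
/- Let G be a finite graph with a perfect matching M. Then af(G,M) ≥ c'(G,M), where c'(G,M) is the maximum cardinality of a compatible M-alternating set of G. -/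
namespace AF

variable {V : Type*}

lemma edges_get_eq {G : SimpleGraph V} {u v : V} (p : G.Walk u v) (i : ℕ)
    (hi : i < p.edges.length) :
    p.edges.get ⟨i, hi⟩ = s(p.getVert i, p.getVert (i + 1)) := by
  induction p generalizing i with
  | nil => simp at hi
  | cons h q ih =>
    cases i with
    | zero => simp [SimpleGraph.Walk.getVert]
    | succ n =>
      simp only [SimpleGraph.Walk.edges_cons, List.get_cons_succ,
        SimpleGraph.Walk.getVert_cons_succ]
      exact ih n (by simpa using Nat.lt_of_succ_lt_succ (by simpa using hi))

lemma getVert_eq_support_getElem {G : SimpleGraph V} {u v : V} (p : G.Walk u v) (i : ℕ)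
    (hi : i < p.support.length) :
    p.getVert i = p.support[i] := by
  induction p generalizing i with
  | nil =>
    cases i with
    | zero => simp [SimpleGraph.Walk.getVert]
    | succ n => simp at hi
  | cons h q ih =>
    cases i with
    | zero => simp [SimpleGraph.Walk.getVert]
    | succ n =>
      simp only [SimpleGraph.Walk.support_cons, List.getElem_cons_succ,
        SimpleGraph.Walk.getVert_cons_succ]
      exact ih n (by simp at hi ⊢; omega)

lemma cycle_getVert_inj {G : SimpleGraph V} {v : V} {c : G.Walk v v} (hc : c.IsCycle)
    {i j : ℕ} (hi : i < c.length) (hj : j < c.length)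
    (h : c.getVert i = c.getVert j) : i = j := by
  have hlen : c.support.length = c.length + 1 := c.length_support
  have h3 := hc.three_le_length
  have hne : c.support.tail ≠ [] := by
    intro hnil
    have h0 : c.support.tail.length = 0 := by simp [hnil]
    rw [List.length_tail, hlen] at h0
    omega
  have hsupp : c.support = v :: c.support.tail := by
    rw [← SimpleGraph.Walk.support_eq_cons]
  have hlast : c.support.tail.getLast hne = v := by
    have hgl := c.getLast_support
    rw [List.getLast_eq_getElem] at hgl ⊢
    rw [List.getElem_tail]
    convert hgl using 2
    rw [List.length_tail]
    omega
  have hndt : c.support.tail.Nodup := hc.support_nodup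
  have hvnot : v ∉ c.support.tail.dropLast := by
    intro hv
    have hdg := List.dropLast_append_getLast hne
    rw [hlast] at hdg
    have hnd := hndt
    rw [← hdg] at hnd
    exact (List.nodup_append'.mp hnd).2.2 hv (by simp)
  have hndrop : c.support.dropLast.Nodup := by
    rw [hsupp, List.dropLast_cons_of_ne_nil hne]
    exact List.nodup_cons.mpr ⟨hvnot, hndt.sublist (List.dropLast_sublist _)⟩
  have hdl : c.support.dropLast.length = c.length := by
    simp [List.length_dropLast, hlen]
  have gi : ∀ k (hk : k < c.length), c.getVert k = c.support.dropLast[k]'(by omega) := by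
    intro k hk
    rw [getVert_eq_support_getElem c k (by omega)]
    rw [List.getElem_dropLast]
  rw [gi i hi, gi j hj] at h
  have h2 : (⟨i, by omega⟩ : Fin c.support.dropLast.length) = ⟨j, by omega⟩ :=
    List.nodup_iff_injective_getElem.mp hndrop h
  exact Fin.mk.inj_iff.mp h2

/-- At each vertex of an alternating cycle there are exactly two cycle edges,
one in `M` and one not. -/
lemma alt_cycle_vertex_edges {G : SimpleGraph V} {M : Set (Sym2 V)} {v : V}
    {c : G.Walk v v} (hc : IsAltCycle G M c) {x : V} (hx : x ∈ c.support) :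
    ∃ em eo, em ∈ c.edges ∧ eo ∈ c.edges ∧ em ∈ M ∧ eo ∉ M ∧ x ∈ em ∧ x ∈ eo ∧
      ∀ e ∈ c.edges, x ∈ e → e = em ∨ e = eo := by
  obtain ⟨hcyc, halt⟩ := hc
  have h3 := hcyc.three_le_length
  have hlen : c.edges.length = c.length := c.length_edges
  -- find j < c.length with getVert j = x
  obtain ⟨k, hk, hkx⟩ := List.mem_iff_getElem.mp hx
  rw [← getVert_eq_support_getElem c k hk] at hkx
  rw [SimpleGraph.Walk.length_support] at hk
  obtain ⟨j, hj, hjx⟩ : ∃ j < c.length, c.getVert j = x := by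
    rcases Nat.lt_or_ge k c.length with h | h
    · exact ⟨k, h, hkx⟩
    · have : k = c.length := by omega
      subst this
      exact ⟨0, by omega, by rw [c.getVert_zero, ← c.getVert_length, hkx]⟩
  set i₀ : ℕ := if j = 0 then c.length - 1 else j - 1 with hi₀def
  have hi₀ : i₀ < c.length := by unfold i₀; split <;> omega
  have hmod : (i₀ + 1) % c.length = j := by
    unfold i₀; split
    · subst ‹j = 0›
      rw [Nat.sub_add_cancel (by omega), Nat.mod_self]
    · rw [Nat.sub_add_cancel (by omega), Nat.mod_eq_of_lt hj]
  have hne : i₀ ≠ j := by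
    intro h; rw [h] at hmod
    rcases Nat.lt_or_ge (j+1) c.length with h' | h'
    · rw [Nat.mod_eq_of_lt h'] at hmod; omega
    · have : j + 1 = c.length := by omega
      rw [this, Nat.mod_self] at hmod; omega
  -- the two edges
  have hEj : c.edges.get ⟨j, by omega⟩ = s(c.getVert j, c.getVert (j+1)) :=
    edges_get_eq c j (by omega)
  have hEi : c.edges.get ⟨i₀, by omega⟩ = s(c.getVert i₀, c.getVert (i₀+1)) :=
    edges_get_eq c i₀ (by omega)
  have hxEj : x ∈ c.edges.get ⟨j, by omega⟩ := by
    rw [hEj, Sym2.mem_iff]; left; exact hjx.symm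
  have hgvi : c.getVert (i₀ + 1) = x := by
    unfold i₀; split
    · have hj0 : j = 0 := ‹j = 0›
      rw [Nat.sub_add_cancel (by omega), c.getVert_length]
      rw [← hjx, hj0, c.getVert_zero]
    · rw [Nat.sub_add_cancel (by omega)]; exact hjx
  have hxEi : x ∈ c.edges.get ⟨i₀, by omega⟩ := by
    rw [hEi, Sym2.mem_iff]; right; exact hgvi.symm
  -- alternation between them
  have halt' := halt ⟨i₀, by omega⟩
  have hfin : (⟨(i₀ + 1) % c.edges.length, Nat.mod_lt _ (Fin.pos ⟨i₀, by omega⟩)⟩ :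
      Fin c.edges.length) = ⟨j, by omega⟩ := by
    apply Fin.ext
    simp only [hlen, hmod]
  rw [hfin] at halt'
  -- coverage
  have hcover : ∀ e ∈ c.edges, x ∈ e →
      e = c.edges.get ⟨j, by omega⟩ ∨ e = c.edges.get ⟨i₀, by omega⟩ := by
    intro e he hxe
    obtain ⟨⟨i, hilt⟩, rfl⟩ := List.mem_iff_get.mp he
    rw [edges_get_eq c i hilt, Sym2.mem_iff] at hxe
    have hi : i < c.length := by omega
    rcases hxe with h | h
    · left
      have : i = j := cycle_getVert_inj hcyc hi hj (by rw [← h]; exact hjx.symm)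
      congr 1
      exact Fin.ext this
    · rcases Nat.lt_or_ge (i+1) c.length with h' | h'
      · right
        have hij : i + 1 = j := cycle_getVert_inj hcyc h' hj (by rw [← h]; exact hjx.symm)
        have : i = i₀ := by unfold i₀; split <;> omega
        congr 1
        exact Fin.ext this
      · right
        have hi1 : i + 1 = c.length := by omega
        have hx0 : c.getVert 0 = x := by
          rw [c.getVert_zero, ← c.getVert_length, ← hi1, h]
        have hj0 : (0 : ℕ) = j := cycle_getVert_inj hcyc (by omega) hj
          (by rw [hx0]; exact hjx.symm)
        have : i = i₀ := by unfold i₀; split <;> omega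
        congr 1
        exact Fin.ext this
  -- choose which is in M
  by_cases hM : c.edges.get ⟨j, by omega⟩ ∈ M
  · refine ⟨c.edges.get ⟨j, by omega⟩, c.edges.get ⟨i₀, by omega⟩,
      List.get_mem _ _, List.get_mem _ _, hM, ?_, hxEj, hxEi, fun e he hxe => (hcover e he hxe)⟩
    intro hMi
    exact (halt'.mp hMi) hM
  · refine ⟨c.edges.get ⟨i₀, by omega⟩, c.edges.get ⟨j, by omega⟩,
      List.get_mem _ _, List.get_mem _ _, halt'.mpr hM, hM, hxEi, hxEj,
      fun e he hxe => (hcover e he hxe).symm⟩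


lemma cycle_meets {G : SimpleGraph V} {M S : Set (Sym2 V)} (hS : IsAntiforcing G M S)
    {v : V} {c : G.Walk v v} (hc : IsAltCycle G M c) : ∃ e ∈ S, e ∈ c.edges := by
  by_contra hno
  push_neg at hno
  obtain ⟨hS1, hS2, hS3⟩ := hS
  set C : Set (Sym2 V) := {e | e ∈ c.edges} with hC
  set N : Set (Sym2 V) := (M \ C) ∪ (C \ M) with hN
  have hnotS : ∀ e ∈ c.edges, e ∉ S := fun e he hs => hno e hs he
  have hmemsupp : ∀ e ∈ c.edges, ∀ x, x ∈ e → x ∈ c.support := by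
    intro e he
    induction e using Sym2.ind with
    | _ a b =>
      intro x hx
      rcases Sym2.mem_iff.mp hx with rfl | rfl
      · exact c.fst_mem_support_of_mem_edges he
      · exact c.snd_mem_support_of_mem_edges he
  have hNpm : IsPM (G.deleteEdges S) N := by
    constructor
    · intro e he
      rcases he with ⟨heM, -⟩ | ⟨heC, -⟩
      · exact hS2.1 heM
      · rw [SimpleGraph.edgeSet_deleteEdges]
        exact ⟨c.edges_subset_edgeSet heC, hnotS e heC⟩
    · intro x
      obtain ⟨f, ⟨hfM, hxf⟩, hfuniq⟩ := hS2.2 x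
      by_cases hxs : x ∈ c.support
      · obtain ⟨em, eo, hemE, heoE, hemM, heoM, hxem, hxeo, hcov⟩ :=
          alt_cycle_vertex_edges hc hxs
        have hemf : em = f := hfuniq em ⟨hemM, hxem⟩
        refine ⟨eo, ⟨Or.inr ⟨heoE, heoM⟩, hxeo⟩, ?_⟩
        rintro e ⟨(⟨heM', heC'⟩ | ⟨heC', heM'⟩), hxe⟩
        · have hef : e = f := hfuniq e ⟨heM', hxe⟩
          have : e ∈ C := by rw [hef, ← hemf]; exact hemE
          exact (heC' this).elim
        · rcases hcov e heC' hxe with rfl | rfl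
          · exact (heM' hemM).elim
          · rfl
      · refine ⟨f, ⟨Or.inl ⟨hfM, fun hfC => hxs (hmemsupp f hfC x hxf)⟩, hxf⟩, ?_⟩
        rintro e ⟨(⟨heM', -⟩ | ⟨heC', -⟩), hxe⟩
        · exact hfuniq e ⟨heM', hxe⟩
        · exact absurd (hmemsupp e heC' x hxe) hxs
  have hNM := hS3 N hNpm
  obtain ⟨em, eo, hemE, heoE, hemM, heoM, -, -, -⟩ :=
    alt_cycle_vertex_edges hc c.start_mem_support
  have heoN : eo ∈ N := Or.inr ⟨heoE, heoM⟩
  rw [hNM] at heoN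
  exact heoM heoN


/-- `af(G,M) ≥ c'(G,M)`. -/
theorem af_ge_cmax {V : Type*} [Fintype V]
    (G : SimpleGraph V) (M : Set (Sym2 V)) (hM : IsPM G M) :
    cmax G M ≤ af G M := by
  classical
  have hT : ∃ n, n ∈ {n | ∃ S : Set (Sym2 V), S.Finite ∧ S.ncard = n ∧ IsAntiforcing G M S} := by
    refine ⟨(G.edgeSet \ M).ncard, G.edgeSet \ M, Set.toFinite _, rfl, ?_, ?_, ?_⟩
    · exact fun e he => he
    · constructor
      · intro e he
        rw [SimpleGraph.edgeSet_deleteEdges]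
        exact ⟨hM.1 he, fun h => h.2 he⟩
      · exact hM.2
    · intro N hN
      have hNM : N ⊆ M := by
        intro e he
        have h0 := hN.1 he
        rw [SimpleGraph.edgeSet_deleteEdges] at h0
        by_contra heM
        exact h0.2 ⟨h0.1, heM⟩
      ext e
      constructor
      · exact fun h => hNM h
      · intro heM
        obtain ⟨e', ⟨he'N, hxe'⟩, -⟩ := hN.2 e.out.1
        obtain ⟨f, hf, hfuniq⟩ := hM.2 e.out.1
        have h1 : e' = f := hfuniq e' ⟨hNM he'N, hxe'⟩
        have h2 : e = f := hfuniq e ⟨heM, Sym2.out_fst_mem e⟩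
        rw [h2, ← h1]; exact he'N
  have haf : af G M ∈ {n | ∃ S : Set (Sym2 V), S.Finite ∧ S.ncard = n ∧ IsAntiforcing G M S} :=
    Nat.sInf_mem hT
  obtain ⟨S, hSfin, hScard, hSaf⟩ := haf
  apply csSup_le'
  rintro m ⟨𝒞, h𝒞fin, rfl, hcyc, hcompat⟩
  have hex : ∀ C : ↥𝒞, ∃ e : ↥S, (e : Sym2 V) ∈ (C : Set (Sym2 V)) := by
    rintro ⟨C, hC⟩
    obtain ⟨v, c, hc, hceq⟩ := hcyc C hC
    obtain ⟨e, heS, hec⟩ := cycle_meets hSaf hc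
    exact ⟨⟨e, heS⟩, show e ∈ C from hceq ▸ hec⟩
  choose g hg using hex
  have hginj : Function.Injective g := by
    rintro C₁ C₂ hgeq
    have h1 := hg C₁
    have h2 := hg C₂
    rw [hgeq] at h1
    by_contra hne
    have hvne : (C₁ : Set (Sym2 V)) ≠ (C₂ : Set (Sym2 V)) := fun h => hne (Subtype.ext h)
    have hmem := hcompat C₁.1 C₁.2 C₂.1 C₂.2 hvne (Set.mem_inter h1 h2)
    exact (hSaf.1 (g C₂).2).2 hmem
  have hle : 𝒞.ncard ≤ S.ncard := by
    rw [← Nat.card_coe_set_eq, ← Nat.card_coe_set_eq]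
    have : Finite ↥S := hSfin.to_subtype
    exact Nat.card_le_card_of_injective g hginj
  omega

end AF
end

section
/- Let G be a graph with a perfect matching M, and let S ⊆ E(G)\M. Then S is an anti-forcing set of M if and only if G ⊖ S is the empty graph, where G ⊖ S is obtained from G − S by deleting the endpoints of all edges forced by S and deleting all edges anti-forced by S. -/
/-!
If `M` is the unique perfect matching of `G - S`, every edge of `M` is forced, and these edges
cover all vertices. Conversely, if forced edges cover every vertex, then any perfect matching `N`
of `G - S` contains, at each vertex, the forced edge there, which also lies in `M`; two perfect
matchings that agree at every vertex are equal.
-/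

namespace AF

variable {V : Type*}

theorem IsPM.deleteEdges {G : SimpleGraph V} {M S : Set (Sym2 V)} (hM : IsPM G M)
    (hS : Disjoint S M) : IsPM (G.deleteEdges S) M := by
  refine ⟨fun e he => ?_, hM.2⟩
  rw [SimpleGraph.edgeSet_deleteEdges]
  exact ⟨hM.1 he, hS.notMem_of_mem_right he⟩

theorem IsPM.subset_of_forall_exists_mem_inter {H : SimpleGraph V} {M N : Set (Sym2 V)}
    (hN : IsPM H N) (h : ∀ v, ∃ e ∈ M ∩ N, v ∈ e) : N ⊆ M := by
  intro f hf
  obtain ⟨e, ⟨heM, heN⟩, hve⟩ := h f.out.1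
  obtain rfl : f = e := (hN.2 _).unique ⟨hf, f.out_fst_mem⟩ ⟨heN, hve⟩
  exact heM

theorem IsPM.eq_of_forall_exists_mem_inter {H K : SimpleGraph V} {M N : Set (Sym2 V)}
    (hM : IsPM H M) (hN : IsPM K N) (h : ∀ v, ∃ e ∈ M ∩ N, v ∈ e) : M = N :=
  (hN.subset_of_forall_exists_mem_inter h).antisymm'
    (hM.subset_of_forall_exists_mem_inter (by simpa only [Set.inter_comm] using h))

theorem IsAntiforcing.forcedBy_of_mem {G : SimpleGraph V} {M S : Set (Sym2 V)}
    (hS : IsAntiforcing G M S) {e : Sym2 V} (he : e ∈ M) : ForcedBy G S e :=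
  ⟨hS.2.1.1 he, fun N hN => hS.2.2 N hN ▸ he⟩

theorem ominusVerts_eq_empty_iff {G : SimpleGraph V} {S : Set (Sym2 V)} :
    ominusVerts G S = ∅ ↔ ∀ v, ∃ e, ForcedBy G S e ∧ v ∈ e := by
  simp only [Set.eq_empty_iff_forall_notMem, ominusVerts, Set.mem_ofPred_eq, not_not]

theorem isAntiforcing_iff_ominus_empty_general {V : Type*}
    (G : SimpleGraph V) (M : Set (Sym2 V)) (hM : IsPM G M)
    (S : Set (Sym2 V)) (hS : S ⊆ G.edgeSet \ M) :
    IsAntiforcing G M S ↔ ominusVerts G S = ∅ := by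
  rw [ominusVerts_eq_empty_iff]
  constructor
  · intro hAF v
    obtain ⟨e, ⟨heM, hve⟩, -⟩ := hAF.2.1.2 v
    exact ⟨e, hAF.forcedBy_of_mem heM, hve⟩
  · intro hforced
    have hPM : IsPM (G.deleteEdges S) M :=
      hM.deleteEdges (Set.disjoint_left.2 fun _ he => (hS he).2)
    refine ⟨hS, hPM, fun N hN => (hPM.eq_of_forall_exists_mem_inter hN fun v => ?_).symm⟩
    obtain ⟨e, he, hve⟩ := hforced v
    exact ⟨e, ⟨he.2 M hPM, he.2 N hN⟩, hve⟩

/-- `S` is an anti-forcing set of `M` iff `G ⊖ S` is the empty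
graph (all of its vertices have been deleted). -/
theorem isAntiforcing_iff_ominus_empty {V : Type*} [Fintype V]
    (G : SimpleGraph V) (M : Set (Sym2 V)) (hM : IsPM G M)
    (S : Set (Sym2 V)) (hS : S ⊆ G.edgeSet \ M) :
    IsAntiforcing G M S ↔ ominusVerts G S = ∅ :=
  isAntiforcing_iff_ominus_empty_general G M hM S hS

end AF
end

section
/- Let G be a graph with a perfect matching M, let 𝒞 be a compatible M-alternating set of G, and let S ⊆ E(G)\M consist of exactly one edge from each cycle of 𝒞. If S anti-forces all other edges of E(𝒞) ∩ (E(G)\M), then af(G,M) = af(G ⊖ S, M ∩ E(G ⊖ S)) + |S|. -/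
namespace AF

variable {V : Type*}

/-! ### Auxiliary lemmas -/

section Aux
variable {V : Type*}

lemma sym2_cases (z : Sym2 V) : ∃ x y, z = s(x, y) :=
  Sym2.ind (fun x y => ⟨x, y, rfl⟩) z

lemma cover_eq {M N : Set (Sym2 V)} (hM : ∀ v : V, ∃! e, e ∈ M ∧ v ∈ e)
    (hN : ∀ v : V, ∃! e, e ∈ N ∧ v ∈ e) (h : N ⊆ M) : N = M := by
  ext e
  refine ⟨fun he => h he, fun he => ?_⟩
  obtain ⟨a, b, rfl⟩ := sym2_cases e
  obtain ⟨f, ⟨hfN, hfa⟩, _⟩ := hN a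
  obtain ⟨g, hg, hguniq⟩ := hM a
  have h1 : f = g := hguniq f ⟨h hfN, hfa⟩
  have h2 : s(a, b) = g := hguniq _ ⟨he, by simp⟩
  rw [h2, ← h1]; exact hfN

lemma pm_mono {G : SimpleGraph V} {A B : Set (Sym2 V)} (h : A ⊆ B) {N : Set (Sym2 V)}
    (hN : IsPM (G.deleteEdges B) N) : IsPM (G.deleteEdges A) N := by
  obtain ⟨h1, h2⟩ := hN
  refine ⟨?_, h2⟩
  rw [SimpleGraph.edgeSet_deleteEdges] at h1 ⊢
  exact h1.trans (Set.diff_subset_diff_right h)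

lemma pm_congr {G₁ G₂ : SimpleGraph V} (h : G₁.edgeSet = G₂.edgeSet) {N : Set (Sym2 V)}
    (hN : IsPM G₁ N) : IsPM G₂ N := ⟨h ▸ hN.1, hN.2⟩

lemma pm_exists_pair {M : Set (Sym2 V)} (hM : ∀ v : V, ∃! e, e ∈ M ∧ v ∈ e) (v : V) :
    ∃ w, s(v, w) ∈ M ∧ ∀ e ∈ M, v ∈ e → e = s(v, w) := by
  obtain ⟨e, ⟨heM, hve⟩, huniq⟩ := hM v
  obtain ⟨w, rfl⟩ := Sym2.mem_iff_exists.mp hve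
  exact ⟨w, heM, fun f hf hvf => huniq f ⟨hf, hvf⟩⟩

lemma compl_antiforcing {G : SimpleGraph V} {M : Set (Sym2 V)} (h : IsPM G M) :
    IsAntiforcing G M (G.edgeSet \ M) := by
  refine ⟨fun e he => he, ⟨?_, h.2⟩, fun N hN => ?_⟩
  · rw [SimpleGraph.edgeSet_deleteEdges]
    exact fun e he => ⟨h.1 he, fun hd => hd.2 he⟩
  · refine cover_eq h.2 hN.2 fun e heN => ?_
    have := hN.1 heN
    rw [SimpleGraph.edgeSet_deleteEdges] at this
    by_contra heM
    exact this.2 ⟨this.1, heM⟩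

lemma af_attained [Finite V] {G : SimpleGraph V} {M : Set (Sym2 V)} (h : IsPM G M) :
    ∃ T : Set (Sym2 V), T.Finite ∧ T.ncard = af G M ∧ IsAntiforcing G M T := by
  have hA : {n | ∃ S : Set (Sym2 V), S.Finite ∧ S.ncard = n ∧ IsAntiforcing G M S}.Nonempty :=
    ⟨_, G.edgeSet \ M, Set.toFinite _, rfl, compl_antiforcing h⟩
  obtain ⟨T, h1, h2, h3⟩ := Nat.sInf_mem hA
  exact ⟨T, h1, h2, h3⟩

lemma af_le {G : SimpleGraph V} {M T : Set (Sym2 V)} (h : IsAntiforcing G M T)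
    (hfin : T.Finite) : af G M ≤ T.ncard :=
  Nat.sInf_le ⟨T, hfin, rfl, h⟩

lemma sym2_isEmpty [IsEmpty V] : IsEmpty (Sym2 V) :=
  ⟨fun z => by obtain ⟨x, y, rfl⟩ := sym2_cases z; exact isEmptyElim x⟩

lemma af_empty [IsEmpty V] (G : SimpleGraph V) (M : Set (Sym2 V)) : af G M = 0 := by
  haveI := sym2_isEmpty (V := V)
  have hanti : IsAntiforcing G M ∅ := by
    refine ⟨Set.empty_subset _, ⟨?_, fun v => isEmptyElim v⟩, fun N _ => ?_⟩
    · rw [Set.eq_empty_of_isEmpty M]; exact Set.empty_subset _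
    · rw [Set.eq_empty_of_isEmpty M, Set.eq_empty_of_isEmpty N]
  have : af G M ≤ 0 := by
    simpa using af_le hanti Set.finite_empty
  omega

end Aux

section Cycle
variable {V : Type*}

lemma edges_get {G : SimpleGraph V} {u v : V} (p : G.Walk u v) (i : ℕ) (h : i < p.edges.length) :
    p.edges.get ⟨i, h⟩ = s(p.getVert i, p.getVert (i + 1)) := by
  induction p generalizing i with
  | nil => simp at h
  | cons hadj q ih =>
    cases i with
    | zero => simp [SimpleGraph.Walk.edges_cons, SimpleGraph.Walk.getVert]
    | succ n =>
      simp only [SimpleGraph.Walk.edges_cons, List.get_cons_succ,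
        SimpleGraph.Walk.getVert_cons_succ]
      exact ih n _

lemma support_get {G : SimpleGraph V} {u v : V} (p : G.Walk u v) (i : ℕ)
    (h : i < p.support.length) : p.support.get ⟨i, h⟩ = p.getVert i := by
  induction p generalizing i with
  | nil =>
    simp only [SimpleGraph.Walk.support_nil, List.length_singleton] at h
    interval_cases i
    simp [SimpleGraph.Walk.getVert]
  | cons hadj q ih =>
    cases i with
    | zero => simp [SimpleGraph.Walk.getVert]
    | succ n =>
      simp only [SimpleGraph.Walk.support_cons, List.get_cons_succ,
        SimpleGraph.Walk.getVert_cons_succ]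
      exact ih n _

lemma getVert_injOn {G : SimpleGraph V} {v : V} {c : G.Walk v v} (hc : c.IsCycle)
    {i j : ℕ} (hi1 : 1 ≤ i) (hi2 : i ≤ c.length) (hj1 : 1 ≤ j) (hj2 : j ≤ c.length)
    (hij : c.getVert i = c.getVert j) : i = j := by
  have hnd := hc.support_nodup
  have hlen : c.support.length = c.length + 1 := SimpleGraph.Walk.length_support c
  have hlt : i - 1 < c.support.tail.length := by rw [List.length_tail, hlen]; omega
  have hlt' : j - 1 < c.support.tail.length := by rw [List.length_tail, hlen]; omega
  have e1 : c.support.tail.get ⟨i - 1, hlt⟩ = c.getVert i := by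
    rw [List.get_tail, support_get]; congr 1; omega
  have e2 : c.support.tail.get ⟨j - 1, hlt'⟩ = c.getVert j := by
    rw [List.get_tail, support_get]; congr 1; omega
  have := (List.Nodup.get_inj_iff hnd).mp (e1.trans (hij.trans e2.symm))
  have := Fin.mk.injEq .. ▸ this
  omega

lemma cycle_incidence {G : SimpleGraph V} {v : V} {c : G.Walk v v} (hc : c.IsCycle)
    {u : V} (hu : u ∈ c.support) :
    ∃ a : ℕ, a < c.length ∧ ∀ i, i < c.length →
      (u ∈ s(c.getVert i, c.getVert (i + 1)) ↔ i = a ∨ i = (a + 1) % c.length) := by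
  have hn3 : 3 ≤ c.length := hc.three_le_length
  obtain ⟨k, hk, hkle⟩ := SimpleGraph.Walk.mem_support_iff_exists_getVert.mp hu
  obtain ⟨p, hp1, hp2, hpu⟩ : ∃ p, 1 ≤ p ∧ p ≤ c.length ∧ c.getVert p = u := by
    rcases Nat.eq_zero_or_pos k with rfl | hk0
    · exact ⟨c.length, by omega, le_refl _, by rw [SimpleGraph.Walk.getVert_length, ← hk,
        SimpleGraph.Walk.getVert_zero]⟩
    · exact ⟨k, hk0, hkle, hk⟩
  refine ⟨p - 1, by omega, fun i hi => ?_⟩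
  have hpa : p - 1 + 1 = p := by omega
  constructor
  · intro hmem
    rcases Sym2.mem_iff.mp hmem with h1 | h2
    · rcases Nat.eq_zero_or_pos i with rfl | hi0
      · have : c.getVert c.length = c.getVert p := by
          rw [SimpleGraph.Walk.getVert_length, hpu, h1, SimpleGraph.Walk.getVert_zero]
        have hpn : c.length = p := getVert_injOn hc (by omega) le_rfl hp1 hp2 this
        right
        rw [hpa, hpn, Nat.mod_self]
      · right
        have hip : p = i := getVert_injOn hc hp1 hp2 hi0 (by omega) (hpu.trans h1)
        rw [hpa, ← hip]
        exact (Nat.mod_eq_of_lt (hip ▸ hi)).symm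
    · left
      have := getVert_injOn hc hp1 hp2 (by omega) (by omega) (hpu.trans h2)
      omega
  · rintro (rfl | rfl)
    · rw [hpa, hpu]; simp
    · rcases Nat.lt_or_ge p c.length with hlt | hge
      · have : (p - 1 + 1) % c.length = p := by rw [hpa]; exact Nat.mod_eq_of_lt hlt
        rw [this, hpu]; simp
      · have hpn : p = c.length := by omega
        have hm0 : (p - 1 + 1) % c.length = 0 := by rw [hpa, hpn, Nat.mod_self]
        have huv : u = v := by rw [← hpu, hpn, SimpleGraph.Walk.getVert_length]
        rw [hm0, SimpleGraph.Walk.getVert_zero]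
        exact Sym2.mem_iff.mpr (Or.inl huv)

lemma mem_support_of_mem_edges' {G : SimpleGraph V} {u v w : V} {p : G.Walk v w}
    {e : Sym2 V} (he : e ∈ p.edges) (hu : u ∈ e) : u ∈ p.support := by
  obtain ⟨x, y, rfl⟩ := sym2_cases e
  rcases Sym2.mem_iff.mp hu with rfl | rfl
  · exact p.fst_mem_support_of_mem_edges he
  · exact p.snd_mem_support_of_mem_edges he

/-- The symmetric difference `M Δ E(c)` is a perfect matching of `G`;
also `E(c)` contains an edge not in `M`. -/
lemma swap_pm {G : SimpleGraph V} {M : Set (Sym2 V)} (hM : IsPM G M) {v : V} {c : G.Walk v v}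
    (hc : IsAltCycle G M c) :
    IsPM G ((M \ {e | e ∈ c.edges}) ∪ ({e | e ∈ c.edges} \ M)) ∧
      ∃ e, e ∈ c.edges ∧ e ∉ M := by
  obtain ⟨hcyc, halt⟩ := hc
  have hne : c.edges.length = c.length := SimpleGraph.Walk.length_edges c
  have hn3 : 3 ≤ c.length := hcyc.three_le_length
  set C : Set (Sym2 V) := {e | e ∈ c.edges} with hC
  have hwit : ∃ e, e ∈ c.edges ∧ e ∉ M := by
    have h0 : 0 < c.edges.length := by omega
    by_cases h : c.edges.get ⟨0, h0⟩ ∈ M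
    · have := (halt ⟨0, h0⟩).mp h
      exact ⟨_, c.edges.get_mem _, this⟩
    · exact ⟨_, c.edges.get_mem _, h⟩
  refine ⟨⟨?_, ?_⟩, hwit⟩
  · rintro e (⟨heM, -⟩ | ⟨heC, -⟩)
    · exact hM.1 heM
    · exact SimpleGraph.Walk.edges_subset_edgeSet c heC
  intro u
  obtain ⟨w, hw, huniq⟩ := pm_exists_pair hM.2 u
  by_cases hu : u ∈ c.support
  · obtain ⟨a, ha, hainc⟩ := cycle_incidence hcyc hu
    set b := (a + 1) % c.length with hb
    have hbn : b < c.length := Nat.mod_lt _ (by omega)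
    have ha' : a < c.edges.length := by omega
    have hb' : b < c.edges.length := by omega
    set ea := s(c.getVert a, c.getVert (a + 1)) with hea
    set eb := s(c.getVert b, c.getVert (b + 1)) with heb
    have hgeta : c.edges.get ⟨a, ha'⟩ = ea := edges_get c a ha'
    have hgetb : c.edges.get ⟨b, hb'⟩ = eb := edges_get c b hb'
    have heaC : ea ∈ C := by rw [← hgeta]; exact c.edges.get_mem _
    have hebC : eb ∈ C := by rw [← hgetb]; exact c.edges.get_mem _
    have huea : u ∈ ea := (hainc a ha).mpr (Or.inl rfl)
    have hueb : u ∈ eb := (hainc b hbn).mpr (Or.inr rfl)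
    have honly : ∀ f ∈ C, u ∈ f → f = ea ∨ f = eb := by
      intro f hf huf
      obtain ⟨i, hif⟩ := List.get_of_mem hf
      have hi : (i : ℕ) < c.length := by omega
      have : f = s(c.getVert i, c.getVert (i + 1)) := by
        rw [← hif]; exact edges_get c i i.isLt
      rcases (hainc i hi).mp (this ▸ huf) with h | h
      · left; rw [this]; simp only [hea]; rw [h]
      · right; rw [this]; simp only [heb]; rw [h]
    have haltab : ea ∈ M ↔ eb ∉ M := by
      have h := halt ⟨a, ha'⟩
      simp only [edges_get] at h
      rw [hne] at h
      exact h
    have main : ∀ e1 e2 : Sym2 V, e1 ∈ C → e2 ∈ C → u ∈ e1 → u ∈ e2 →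
        e1 ∈ M → e2 ∉ M → (∀ f ∈ C, u ∈ f → f = e1 ∨ f = e2) →
        ∃! e, e ∈ (M \ C) ∪ (C \ M) ∧ u ∈ e := by
      intro e1 e2 h1C h2C hu1 hu2 h1M h2M honly'
      refine ⟨e2, ⟨Or.inr ⟨h2C, h2M⟩, hu2⟩, ?_⟩
      rintro f ⟨hf | hf, huf⟩
      · exfalso
        have : f = s(u, w) := huniq f hf.1 huf
        have he1 : e1 = s(u, w) := huniq e1 h1M hu1
        exact hf.2 (by rw [this, ← he1]; exact h1C)
      · rcases honly' f hf.1 huf with rfl | rfl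
        · exact absurd h1M hf.2
        · rfl
    by_cases hea' : ea ∈ M
    · exact main ea eb heaC hebC huea hueb hea' (haltab.mp hea') honly
    · have hebM : eb ∈ M := by
        by_contra h
        exact hea' (haltab.mpr h)
      exact main eb ea hebC heaC hueb huea hebM hea'
        (fun f hf huf => (honly f hf huf).symm)
  · refine ⟨s(u, w), ⟨Or.inl ⟨hw, fun hC => hu (mem_support_of_mem_edges' hC (by simp))⟩,
      by simp⟩, ?_⟩
    rintro f ⟨hf | hf, huf⟩
    · exact huniq f hf.1 huf
    · exact absurd (mem_support_of_mem_edges' hf.1 huf) hu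

lemma cycle_hit {G : SimpleGraph V} {M T : Set (Sym2 V)} (hM : IsPM G M)
    (hT : IsAntiforcing G M T) {v : V} {c : G.Walk v v} (hc : IsAltCycle G M c) :
    ∃ e, e ∈ T ∧ e ∈ c.edges ∧ e ∉ M := by
  by_contra h
  push_neg at h
  obtain ⟨hNpm, e₀, he₀C, he₀M⟩ := swap_pm hM hc
  have hpm : IsPM (G.deleteEdges T) ((M \ {e | e ∈ c.edges}) ∪ ({e | e ∈ c.edges} \ M)) := by
    refine ⟨?_, hNpm.2⟩
    rw [SimpleGraph.edgeSet_deleteEdges]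
    rintro e (⟨heM, heC⟩ | ⟨heC, heM⟩)
    · exact ⟨hM.1 heM, fun heT => (hT.1 heT).2 heM⟩
    · exact ⟨hNpm.1 (Or.inr ⟨heC, heM⟩), fun heT => heM (h e heT heC)⟩
  have hNM := hT.2.2 _ hpm
  have : e₀ ∈ (M \ {e | e ∈ c.edges}) ∪ ({e | e ∈ c.edges} \ M) :=
    Or.inr ⟨he₀C, he₀M⟩
  rw [hNM] at this
  exact he₀M this

end Cycle

section Ominus
variable {V : Type*} {G : SimpleGraph V} {M S : Set (Sym2 V)}

lemma pm_deleteEdges (hM : IsPM G M) (hSsub : S ⊆ G.edgeSet \ M) :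
    IsPM (G.deleteEdges S) M := by
  refine ⟨?_, hM.2⟩
  rw [SimpleGraph.edgeSet_deleteEdges]
  exact fun e he => ⟨hM.1 he, fun heS => (hSsub heS).2 he⟩

lemma ominus_edge {a b : ↥(ominusVerts G S)} :
    s(a, b) ∈ (ominus G S).edgeSet ↔
      s(a.val, b.val) ∈ G.edgeSet ∧ s(a.val, b.val) ∉ S ∧
        ¬ AntiForcedBy G S s(a.val, b.val) := by
  simp only [ominus, SimpleGraph.mem_edgeSet, SimpleGraph.induce, SimpleGraph.comap_adj,
    Function.Embedding.coe_subtype, SimpleGraph.deleteEdges_adj, Set.mem_union,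
    Set.mem_setOf_eq]
  tauto

lemma lifted_edge_props {e' : Sym2 ↥(ominusVerts G S)} (h : e' ∈ (ominus G S).edgeSet) :
    Sym2.map Subtype.val e' ∈ G.edgeSet ∧ Sym2.map Subtype.val e' ∉ S ∧
      ¬ AntiForcedBy G S (Sym2.map Subtype.val e') := by
  obtain ⟨a, b, rfl⟩ := sym2_cases e'
  rw [Sym2.map_pair_eq]
  exact ominus_edge.mp h

/-- closure: the `N`-partner of a vertex of `G ⊖ S` is again in `G ⊖ S`,
for any perfect matching `N` of `G - S`. -/
lemma closureN {N : Set (Sym2 V)} (hN : IsPM (G.deleteEdges S) N) {a b : V}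
    (hab : s(a, b) ∈ N) (ha : a ∈ ominusVerts G S) : b ∈ ominusVerts G S := by
  by_contra hb
  simp only [ominusVerts, Set.mem_setOf_eq, not_not] at hb
  obtain ⟨f, hf, hbf⟩ := hb
  have hfN : f ∈ N := hf.2 N hN
  obtain ⟨g, hg, hguniq⟩ := hN.2 b
  have h1 : f = g := hguniq f ⟨hfN, hbf⟩
  have h2 : s(a, b) = g := hguniq _ ⟨hab, by simp⟩
  exact ha ⟨f, hf, by rw [h1, ← h2]; simp⟩

/-- A PM of `G - (S ∪ S')` restricts to a PM of `(G ⊖ S) - S'`. -/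
lemma restrict_pm (hM : IsPM G M) (hSsub : S ⊆ G.edgeSet \ M)
    {S' : Set (Sym2 ↥(ominusVerts G S))} {N : Set (Sym2 V)}
    (hN : IsPM (G.deleteEdges (S ∪ Sym2.map Subtype.val '' S')) N) :
    IsPM ((ominus G S).deleteEdges S') {e' | Sym2.map Subtype.val e' ∈ N} := by
  have hNS : IsPM (G.deleteEdges S) N := pm_mono Set.subset_union_left hN
  constructor
  · rintro e' he'
    obtain ⟨a, b, rfl⟩ := sym2_cases e'
    simp only [Set.mem_setOf_eq, Sym2.map_pair_eq] at he'
    have heG : s(a.val, b.val) ∈ G.edgeSet \ (S ∪ Sym2.map Subtype.val '' S') := by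
      rw [← SimpleGraph.edgeSet_deleteEdges]; exact hN.1 he'
    rw [SimpleGraph.edgeSet_deleteEdges]
    refine ⟨?_, fun hS' => ?_⟩
    · rw [ominus_edge]
      exact ⟨heG.1, fun h => heG.2 (Or.inl h), fun hA => hA.2 N hNS he'⟩
    · refine heG.2 (Or.inr ⟨s(a, b), hS', ?_⟩)
      rw [Sym2.map_pair_eq]
  · intro a
    obtain ⟨w, hw, huniq⟩ := pm_exists_pair hN.2 a.val
    have hwW := closureN hNS hw a.2
    refine ⟨s(a, ⟨w, hwW⟩), ⟨?_, by simp⟩, ?_⟩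
    · show Sym2.map _ _ ∈ N
      rw [Sym2.map_pair_eq]
      exact hw
    · rintro f ⟨hf, haf⟩
      obtain ⟨x, y, rfl⟩ := sym2_cases f
      have hmap : s(x.val, y.val) ∈ N := by
        have : Sym2.map Subtype.val s(x, y) ∈ N := hf
        rwa [Sym2.map_pair_eq] at this
      have haval : (a : V) ∈ s(x.val, y.val) := by
        rcases Sym2.mem_iff.mp haf with rfl | rfl <;> simp
      have heq := huniq _ hmap haval
      apply Sym2.map.injective Subtype.val_injective
      rw [Sym2.map_pair_eq, Sym2.map_pair_eq]
      exact heq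

/-- A PM of `(G ⊖ S) - T|` lifts (together with the forced edges) to a PM of `G - T`. -/
lemma lift_pm (hM : IsPM G M) (hSsub : S ⊆ G.edgeSet \ M) {T : Set (Sym2 V)}
    (hTM : ∀ e ∈ T, e ∉ M) {N' : Set (Sym2 ↥(ominusVerts G S))}
    (hN' : IsPM ((ominus G S).deleteEdges {e' | Sym2.map Subtype.val e' ∈ T}) N') :
    IsPM (G.deleteEdges T) (Sym2.map Subtype.val '' N' ∪ {e | ForcedBy G S e}) := by
  have hMS : IsPM (G.deleteEdges S) M := pm_deleteEdges hM hSsub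
  constructor
  · rintro e (⟨e', he', rfl⟩ | hf)
    · have hedge := hN'.1 he'
      rw [SimpleGraph.edgeSet_deleteEdges] at hedge
      have hprops := lifted_edge_props hedge.1
      rw [SimpleGraph.edgeSet_deleteEdges]
      exact ⟨hprops.1, hedge.2⟩
    · rw [SimpleGraph.edgeSet_deleteEdges]
      have hfM : e ∈ M := hf.2 M hMS
      exact ⟨hM.1 hfM, fun hT => hTM e hT hfM⟩
  · intro u
    by_cases huW : u ∈ ominusVerts G S
    · obtain ⟨e', ⟨he'N, hue'⟩, huniq⟩ := hN'.2 ⟨u, huW⟩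
      refine ⟨Sym2.map Subtype.val e', ⟨Or.inl ⟨e', he'N, rfl⟩,
        Sym2.mem_map.mpr ⟨⟨u, huW⟩, hue', rfl⟩⟩, ?_⟩
      rintro f ⟨hf | hf, huf⟩
      · obtain ⟨f', hf'N, rfl⟩ := hf
        obtain ⟨a, ha, hav⟩ := Sym2.mem_map.mp huf
        have hax : a = ⟨u, huW⟩ := Subtype.ext hav
        have := huniq f' ⟨hf'N, hax ▸ ha⟩
        rw [this]
      · exact absurd ⟨f, hf, huf⟩ huW
    · have : ∃ f, ForcedBy G S f ∧ u ∈ f := by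
        simpa [ominusVerts] using huW
      obtain ⟨f, hf, huf⟩ := this
      refine ⟨f, ⟨Or.inr hf, huf⟩, ?_⟩
      rintro g ⟨hg | hg, hug⟩
      · exfalso
        obtain ⟨g', hg', rfl⟩ := hg
        obtain ⟨a, ha, hav⟩ := Sym2.mem_map.mp hug
        exact huW (hav ▸ a.2)
      · have h1 : g ∈ M := hg.2 M hMS
        have h2 : f ∈ M := hf.2 M hMS
        obtain ⟨m, hm, hmu⟩ := hM.2 u
        rw [hmu g ⟨h1, hug⟩, hmu f ⟨h2, huf⟩]

end Ominus


/-- if `S` consists of exactly one non-matching edge from each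
cycle of a compatible `M`-alternating set `𝒞`, and `S` anti-forces all other
edges of `E(𝒞) \ M`, then `af(G,M) = af(G ⊖ S, M ∩ E(G ⊖ S)) + |S|`. -/
theorem af_eq_af_ominus_add_card {V : Type*} [Fintype V]
    (G : SimpleGraph V) (M : Set (Sym2 V)) (hM : IsPM G M)
    (𝒞 : Set (Set (Sym2 V))) (h𝒞 : IsCompatibleAltSet G M 𝒞) (h𝒞fin : 𝒞.Finite)
    (S : Set (Sym2 V)) (hSsub : S ⊆ G.edgeSet \ M)
    (hone : ∀ C ∈ 𝒞, ∃! e, e ∈ S ∧ e ∈ C)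
    (hcover : ∀ e ∈ S, ∃ C ∈ 𝒞, e ∈ C)
    (hanti : ∀ e : Sym2 V, (∃ C ∈ 𝒞, e ∈ C) → e ∉ M → e ∉ S → AntiForcedBy G S e) :
    af G M = af (ominus G S) (restrictEdges (ominusVerts G S) M) + S.ncard := by
  classical
  rcases isEmpty_or_nonempty V with hV | hV
  · haveI := sym2_isEmpty (V := V)
    rw [af_empty, af_empty, Set.eq_empty_of_isEmpty S, Set.ncard_empty]
  haveI : Nonempty (Sym2 V) := ⟨s(Classical.arbitrary V, Classical.arbitrary V)⟩
  have hMS : IsPM (G.deleteEdges S) M := pm_deleteEdges hM hSsub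
  have hinj : Function.Injective (Sym2.map (Subtype.val : ↥(ominusVerts G S) → V)) :=
    Sym2.map.injective Subtype.val_injective
  -- `M'` is a perfect matching of `G ⊖ S`
  have hM'pm : IsPM (ominus G S) (restrictEdges (ominusVerts G S) M) := by
    have h0 := restrict_pm (S' := (∅ : Set (Sym2 ↥(ominusVerts G S)))) hM hSsub
      (by simpa using hMS)
    simpa [restrictEdges] using h0
  -- `|𝒞| = |S|`
  have hcard : 𝒞.ncard = S.ncard := by
    have hSex : ∀ C ∈ 𝒞, ∃ e, e ∈ S ∧ e ∈ C := fun C hC => (hone C hC).exists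
    choose! f hf1 hf2 using hSex
    have hfinj : Set.InjOn f 𝒞 := by
      intro C hC D hD hfCD
      by_contra hne
      have : f C ∈ C ∩ D := ⟨hf2 C hC, hfCD ▸ hf2 D hD⟩
      exact (hSsub (hf1 C hC)).2 (h𝒞.2 C hC D hD hne this)
    have himg : f '' 𝒞 = S := by
      apply Set.Subset.antisymm
      · rintro e ⟨C, hC, rfl⟩; exact hf1 C hC
      · intro e heS
        obtain ⟨C, hC, heC⟩ := hcover e heS
        obtain ⟨e₀, he₀, huniq⟩ := hone C hC
        have h1 : e = e₀ := huniq e ⟨heS, heC⟩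
        have h2 : f C = e₀ := huniq (f C) ⟨hf1 C hC, hf2 C hC⟩
        exact ⟨C, hC, by rw [h2, ← h1]⟩
    rw [← himg, Set.ncard_image_of_injOn hfinj]
  -- Part 1 : `af G M ≤ af (G ⊖ S) M' + |S|`
  obtain ⟨T', hT'fin, hT'card, hT'af⟩ := af_attained hM'pm
  have hS₂G : ∀ e ∈ Sym2.map Subtype.val '' T',
      e ∈ G.edgeSet ∧ e ∉ S ∧ ¬ AntiForcedBy G S e ∧ e ∉ M := by
    rintro e ⟨e', he', rfl⟩
    have h1 := hT'af.1 he'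
    have hprops := lifted_edge_props h1.1
    refine ⟨hprops.1, hprops.2.1, hprops.2.2, fun hMe => h1.2 hMe⟩
  have hAFcup : IsAntiforcing G M (S ∪ Sym2.map Subtype.val '' T') := by
    refine ⟨?_, ⟨?_, hM.2⟩, ?_⟩
    · rintro e (he | he)
      · exact hSsub he
      · exact ⟨(hS₂G e he).1, (hS₂G e he).2.2.2⟩
    · rw [SimpleGraph.edgeSet_deleteEdges]
      intro e heM
      refine ⟨hM.1 heM, ?_⟩
      rintro (h | h)
      · exact (hSsub h).2 heM
      · exact (hS₂G e h).2.2.2 heM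
    · intro N hN
      have hN' := restrict_pm hM hSsub (S' := T') hN
      have hNrestr := hT'af.2.2 _ hN'
      refine cover_eq hM.2 hN.2 ?_
      intro e heN
      obtain ⟨a, b, rfl⟩ := sym2_cases e
      by_cases haW : a ∈ ominusVerts G S
      · have hbW : b ∈ ominusVerts G S :=
          closureN (pm_mono Set.subset_union_left hN) heN haW
        have hmem : s((⟨a, haW⟩ : ↥(ominusVerts G S)), ⟨b, hbW⟩) ∈
            restrictEdges (ominusVerts G S) M := by
          rw [← hNrestr]
          show Sym2.map Subtype.val _ ∈ N
          rw [Sym2.map_pair_eq]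
          exact heN
        have : Sym2.map Subtype.val s((⟨a, haW⟩ : ↥(ominusVerts G S)), ⟨b, hbW⟩) ∈ M := hmem
        rwa [Sym2.map_pair_eq] at this
      · have : ∃ f, ForcedBy G S f ∧ a ∈ f := by
          simpa [ominusVerts] using haW
        obtain ⟨f, hf, haf⟩ := this
        have hfN : f ∈ N := hf.2 N (pm_mono Set.subset_union_left hN)
        have hfM : f ∈ M := hf.2 M hMS
        obtain ⟨g, hg, hguniq⟩ := hN.2 a
        have h1 : f = g := hguniq f ⟨hfN, haf⟩
        have h2 : s(a, b) = g := hguniq _ ⟨heN, by simp⟩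
        rw [h2, ← h1]
        exact hfM
  have hdisj1 : Disjoint S (Sym2.map Subtype.val '' T') := by
    rw [Set.disjoint_right]
    intro e he
    exact (hS₂G e he).2.1
  have h1 : af G M ≤ af (ominus G S) (restrictEdges (ominusVerts G S) M) + S.ncard := by
    have hle := af_le hAFcup (Set.toFinite _)
    have e1 : (S ∪ Sym2.map Subtype.val '' T').ncard
        = S.ncard + (Sym2.map Subtype.val '' T').ncard :=
      Set.ncard_union_eq hdisj1 (Set.toFinite _) (Set.toFinite _)
    have e2 : (Sym2.map Subtype.val '' T').ncard = T'.ncard :=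
      Set.ncard_image_of_injective _ hinj
    omega
  -- Part 2 : `af (G ⊖ S) M' + |S| ≤ af G M`
  obtain ⟨T, hTfin, hTcard, hTaf⟩ := af_attained hM
  set T₂ : Set (Sym2 ↥(ominusVerts G S)) :=
    {e' | Sym2.map Subtype.val e' ∈ T} ∩ (ominus G S).edgeSet with hT₂
  have hT₂af : IsAntiforcing (ominus G S) (restrictEdges (ominusVerts G S) M) T₂ := by
    refine ⟨?_, ⟨?_, hM'pm.2⟩, ?_⟩
    · rintro e' ⟨h1, h2⟩
      exact ⟨h2, fun hM'e => (hTaf.1 h1).2 hM'e⟩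
    · rw [SimpleGraph.edgeSet_deleteEdges]
      intro e' he'
      refine ⟨hM'pm.1 he', fun hT₂e => ?_⟩
      exact (hTaf.1 hT₂e.1).2 he'
    · intro N' hN'
      have hN'' : IsPM ((ominus G S).deleteEdges {e' | Sym2.map Subtype.val e' ∈ T}) N' := by
        refine pm_congr ?_ hN'
        rw [SimpleGraph.edgeSet_deleteEdges, SimpleGraph.edgeSet_deleteEdges, hT₂,
          Set.diff_inter_self_eq_diff]
      have hNpm : IsPM (G.deleteEdges T)
          (Sym2.map Subtype.val '' N' ∪ {e | ForcedBy G S e}) :=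
        lift_pm hM hSsub (fun e heT => (hTaf.1 heT).2) hN''
      have hNM := hTaf.2.2 _ hNpm
      refine cover_eq hM'pm.2 hN'.2 ?_
      intro e' he'
      have hmem : Sym2.map Subtype.val e' ∈
          Sym2.map Subtype.val '' N' ∪ {e | ForcedBy G S e} := Or.inl ⟨e', he', rfl⟩
      rw [hNM] at hmem
      exact hmem
  have hhit : ∀ C ∈ 𝒞, ∃ e, e ∈ T ∧ e ∈ C ∧ e ∉ M := by
    intro C hC
    obtain ⟨v, c, hcAlt, hcE⟩ := h𝒞.1 C hC
    obtain ⟨e, he1, he2, he3⟩ := cycle_hit hM hTaf hcAlt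
    exact ⟨e, he1, hcE ▸ he2, he3⟩
  choose! g hg1 hg2 hg3 using hhit
  have hginj : Set.InjOn g 𝒞 := by
    intro C hC D hD hgCD
    by_contra hne
    have : g D ∈ C ∩ D := ⟨hgCD ▸ hg2 C hC, hg2 D hD⟩
    exact hg3 D hD (h𝒞.2 C hC D hD hne this)
  have hT₂'T : Sym2.map Subtype.val '' T₂ ⊆ T := by
    rintro e ⟨e', ⟨h1, _⟩, rfl⟩
    exact h1
  have hE₀T : g '' 𝒞 ⊆ T := by
    rintro e ⟨C, hC, rfl⟩
    exact hg1 C hC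
  have hdisj2 : Disjoint (Sym2.map Subtype.val '' T₂) (g '' 𝒞) := by
    rw [Set.disjoint_right]
    rintro e ⟨C, hC, rfl⟩ ⟨e', ⟨-, he'H⟩, hmap⟩
    have hprops := lifted_edge_props he'H
    rw [hmap] at hprops
    by_cases hS : g C ∈ S
    · exact hprops.2.1 hS
    · exact hprops.2.2 (hanti (g C) ⟨C, hC, hg2 C hC⟩ (hg3 C hC) hS)
  have h2 : af (ominus G S) (restrictEdges (ominusVerts G S) M) + S.ncard ≤ af G M := by
    have hle := af_le hT₂af (Set.toFinite _)
    have e0 : (Sym2.map Subtype.val '' T₂ ∪ g '' 𝒞).ncard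
        = (Sym2.map Subtype.val '' T₂).ncard + (g '' 𝒞).ncard :=
      Set.ncard_union_eq hdisj2 (Set.toFinite _) (Set.toFinite _)
    have e1 : (Sym2.map Subtype.val '' T₂ ∪ g '' 𝒞).ncard ≤ T.ncard :=
      Set.ncard_le_ncard (Set.union_subset hT₂'T hE₀T) hTfin
    have e2 : (Sym2.map Subtype.val '' T₂).ncard = T₂.ncard :=
      Set.ncard_image_of_injective _ hinj
    have e3 : (g '' 𝒞).ncard = 𝒞.ncard := Set.ncard_image_of_injOn hginj
    omega
  omega

end AF
end

section
/- Let Q_n, R_n ∈ ℤ[x] satisfy Q_n = x²Q_{n−1} + (x + 3x²)R_{n−1} − 2x⁴R_{n−2} − 2x³R_{n−3} for n ≥ 3 and R_n = xQ_{n−1} + xR_{n−1} + (2x² − 2x³)R_{n−2} for n ≥ 2. Then for n ≥ 4, R_n satisfies the fourth-order recurrence R_n − (x + x²)R_{n−1} − 3x²R_{n−2} + 2x⁴R_{n−3} + 2x⁴R_{n−4} = 0. -/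
namespace AF

variable {V : Type*}

theorem coupled_recurrence_elim {A : Type*} [CommRing A] (x : A) (Q R : ℕ → A) (m : ℕ)
    (hQ : Q (m + 3) = x ^ 2 * Q (m + 2) + (x + 3 * x ^ 2) * R (m + 2)
      - 2 * x ^ 4 * R (m + 1) - 2 * x ^ 3 * R m)
    (hR₄ : R (m + 4) = x * Q (m + 3) + x * R (m + 3) + (2 * x ^ 2 - 2 * x ^ 3) * R (m + 2))
    (hR₃ : R (m + 3) = x * Q (m + 2) + x * R (m + 2) + (2 * x ^ 2 - 2 * x ^ 3) * R (m + 1)) :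
    R (m + 4) - (x + x ^ 2) * R (m + 3) - 3 * x ^ 2 * R (m + 2)
      + 2 * x ^ 4 * R (m + 1) + 2 * x ^ 4 * R m = 0 := by
  linear_combination hR₄ + x * hQ - x ^ 2 * hR₃

open Polynomial in
/-- eliminating `Q` from the coupled recurrences yields the
fourth-order recurrence for `R`. -/
theorem R_fourth_order_recurrence (Q R : ℕ → Polynomial ℤ)
    (hQ : ∀ n, 3 ≤ n →
      Q n = X ^ 2 * Q (n - 1) + (X + 3 * X ^ 2) * R (n - 1)
        - 2 * X ^ 4 * R (n - 2) - 2 * X ^ 3 * R (n - 3))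
    (hR : ∀ n, 2 ≤ n →
      R n = X * Q (n - 1) + X * R (n - 1) + (2 * X ^ 2 - 2 * X ^ 3) * R (n - 2)) :
    ∀ n, 4 ≤ n →
      R n - (X + X ^ 2) * R (n - 1) - 3 * X ^ 2 * R (n - 2)
        + 2 * X ^ 4 * R (n - 3) + 2 * X ^ 4 * R (n - 4) = 0 := by
  intro n hn
  obtain ⟨m, rfl⟩ := Nat.exists_eq_add_of_le' hn
  simpa using coupled_recurrence_elim X Q R m (by simpa using hQ (m + 3) (by omega))
    (by simpa using hR (m + 4) (by omega)) (by simpa using hR (m + 3) (by omega))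

end AF
end
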